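/- arXiv:2001.05907 — 4 statements merged into one kernel-verified Lean document; each statement's English description precedes it below -/
import Mathlib

section
/- For every t ≥ 1 and n = 2^t, if (x₁, x₂) ∈ BW_{2n} (with x₁, x₂ ∈ ℝⁿ the two halves), then x₁ ∈ BW_n, x₂ ∈ BW_n, and x₂ − x₁ ∈ RBW_n. -/
open Matrix

noncomputable section

/-- `Rmat n` is the `n × n` matrix `I_{n/2} ⊗ R(2)`, block diagonal with
`2 × 2` blocks `[[1, 1], [1, -1]]`, acting on row vectors on the right. -/
def Rmat (n : ℕ) : Matrix (Fin n) (Fin n) ℝ :=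
  Matrix.of fun i j =>
    if (i : ℕ) / 2 = (j : ℕ) / 2 then
      if (i : ℕ) % 2 = 1 ∧ (j : ℕ) % 2 = 1 then -1 else 1
    else 0

/-- Concatenation `(u, v)` of two `2^t`-dimensional vectors into a
`2^(t+1)`-dimensional vector. -/
def concat {t : ℕ} (u v : Fin (2 ^ t) → ℝ) : Fin (2 ^ (t + 1)) → ℝ := fun i =>
  if h : (i : ℕ) < 2 ^ t then u ⟨i, h⟩
  else v ⟨(i : ℕ) - 2 ^ t, by
    have hi := i.isLt
    have h2 : 2 ^ (t + 1) = 2 ^ t + 2 ^ t := by rw [pow_succ]; ring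
    omega⟩

/-- The Barnes–Wall lattices `BW_{2^t} ⊆ ℝ^{2^t}`, defined recursively by
`BW_2 = ℤ²` and `BW_{2n} = {(u, u + v) : u ∈ BW_n, v ∈ BW_n · R(n)}`. -/
def BW : ∀ t : ℕ, Set (Fin (2 ^ t) → ℝ)
  | 0 => {x | ∀ i, ∃ z : ℤ, x i = (z : ℝ)}
  | (t + 1) =>
    {x | ∃ u v : Fin (2 ^ t) → ℝ, u ∈ BW t ∧
      (∃ w ∈ BW t, v = Matrix.vecMul w (Rmat (2 ^ t))) ∧ x = concat u (u + v)}

/-- `RBW_n = {x · R(n) : x ∈ BW_n}`. -/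
def RBW (t : ℕ) : Set (Fin (2 ^ t) → ℝ) :=
  (fun x => Matrix.vecMul x (Rmat (2 ^ t))) '' BW t

/-- Squared Euclidean norm. -/
def sqnorm {m : ℕ} (x : Fin m → ℝ) : ℝ := ∑ i, x i ^ 2

/-- `minDist Λ` is the minimum of `‖x‖²` over nonzero `x ∈ Λ`. -/
def minDist {m : ℕ} (Λ : Set (Fin m → ℝ)) : ℝ :=
  sInf (sqnorm '' {x ∈ Λ | x ≠ 0})

/-! ### Auxiliary lemmas -/

lemma two_pow_succ' (t : ℕ) : 2 ^ (t + 1) = 2 ^ t + 2 ^ t := by rw [pow_succ]; ring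

lemma two_pow_even (t : ℕ) (ht : 1 ≤ t) : ∃ k : ℕ, 2 ^ t = 2 * k ∧ 1 ≤ k := by
  cases t with
  | zero => omega
  | succ s => exact ⟨2 ^ s, by rw [pow_succ]; ring, Nat.one_le_two_pow⟩

/-- Embedding of the low half. -/
def lo {t : ℕ} (i : Fin (2 ^ t)) : Fin (2 ^ (t + 1)) :=
  ⟨i, by have := i.isLt; have := two_pow_succ' t; omega⟩

/-- Embedding of the high half. -/
def hi {t : ℕ} (i : Fin (2 ^ t)) : Fin (2 ^ (t + 1)) :=
  ⟨2 ^ t + i, by have := i.isLt; have := two_pow_succ' t; omega⟩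

lemma concat_lo {t : ℕ} (u v : Fin (2 ^ t) → ℝ) (i : Fin (2 ^ t)) :
    concat u v (lo i) = u i := by
  simp [concat, lo, i.isLt]

lemma concat_hi {t : ℕ} (u v : Fin (2 ^ t) → ℝ) (i : Fin (2 ^ t)) :
    concat u v (hi i) = v i := by
  have h : ¬ ((hi i : ℕ) < 2 ^ t) := by simp [hi]
  rw [concat, dif_neg h]
  congr 1
  ext
  simp [hi]

lemma concat_inj {t : ℕ} {u v u' v' : Fin (2 ^ t) → ℝ}
    (h : concat u v = concat u' v') : u = u' ∧ v = v' := by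
  constructor <;> funext i
  · have := congrFun h (lo i); rwa [concat_lo, concat_lo] at this
  · have := congrFun h (hi i); rwa [concat_hi, concat_hi] at this

lemma concat_add {t : ℕ} (u v u' v' : Fin (2 ^ t) → ℝ) :
    concat u v + concat u' v' = concat (u + u') (v + v') := by
  funext i
  simp only [Pi.add_apply, concat]
  by_cases h : (i : ℕ) < 2 ^ t <;> simp [h]

lemma sum_lo_hi {t : ℕ} (f : Fin (2 ^ (t + 1)) → ℝ) :
    ∑ i, f i = ∑ i : Fin (2 ^ t), f (lo i) + ∑ i : Fin (2 ^ t), f (hi i) := by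
  have h := (two_pow_succ' t).symm
  rw [← Equiv.sum_comp (finCongr h) f, Fin.sum_univ_add]
  congr 1 <;> apply Finset.sum_congr rfl <;> intro i _ <;> congr 1 <;>
    ext <;> simp [lo, hi, finCongr]

lemma Rmat_lo_lo {t : ℕ} (i j : Fin (2 ^ t)) :
    Rmat (2 ^ (t + 1)) (lo i) (lo j) = Rmat (2 ^ t) i j := rfl

lemma Rmat_hi_hi {t : ℕ} (ht : 1 ≤ t) (i j : Fin (2 ^ t)) :
    Rmat (2 ^ (t + 1)) (hi i) (hi j) = Rmat (2 ^ t) i j := by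
  obtain ⟨k, hk, hk1⟩ := two_pow_even t ht
  simp only [Rmat, Matrix.of_apply, hi]
  have h1 : (2 ^ t + (i : ℕ)) / 2 = (2 ^ t + (j : ℕ)) / 2 ↔ (i : ℕ) / 2 = (j : ℕ) / 2 := by
    omega
  have h2 : (2 ^ t + (i : ℕ)) % 2 = (i : ℕ) % 2 := by omega
  have h3 : (2 ^ t + (j : ℕ)) % 2 = (j : ℕ) % 2 := by omega
  rw [h2, h3, if_congr h1 rfl rfl]

lemma Rmat_hi_lo {t : ℕ} (ht : 1 ≤ t) (i j : Fin (2 ^ t)) :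
    Rmat (2 ^ (t + 1)) (hi i) (lo j) = 0 := by
  obtain ⟨k, hk, hk1⟩ := two_pow_even t ht
  have hi' := i.isLt
  have hj' := j.isLt
  simp only [Rmat, Matrix.of_apply, hi, lo]
  rw [if_neg (by omega)]

lemma Rmat_lo_hi {t : ℕ} (ht : 1 ≤ t) (i j : Fin (2 ^ t)) :
    Rmat (2 ^ (t + 1)) (lo i) (hi j) = 0 := by
  obtain ⟨k, hk, hk1⟩ := two_pow_even t ht
  have hi' := i.isLt
  have hj' := j.isLt
  simp only [Rmat, Matrix.of_apply, hi, lo]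
  rw [if_neg (by omega)]

lemma Rmat_one : Rmat (2 ^ 0) = 1 := by
  ext i j
  fin_cases i; fin_cases j
  simp [Rmat, Matrix.one_apply]

/-- Right multiplication by `R` respects the concatenation structure
(for halves of even dimension). -/
lemma vecMul_concat {t : ℕ} (ht : 1 ≤ t) (a b : Fin (2 ^ t) → ℝ) :
    Matrix.vecMul (concat a b) (Rmat (2 ^ (t + 1))) =
      concat (Matrix.vecMul a (Rmat (2 ^ t))) (Matrix.vecMul b (Rmat (2 ^ t))) := by
  have hsplit : ∀ j' : Fin (2 ^ (t + 1)),
      Matrix.vecMul (concat a b) (Rmat (2 ^ (t + 1))) j' =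
        ∑ i : Fin (2 ^ t), a i * Rmat (2 ^ (t + 1)) (lo i) j' +
          ∑ i : Fin (2 ^ t), b i * Rmat (2 ^ (t + 1)) (hi i) j' := by
    intro j'
    rw [Matrix.vecMul, dotProduct,
      sum_lo_hi (fun i => concat a b i * Rmat (2 ^ (t + 1)) i j')]
    simp [concat_lo, concat_hi]
  funext j
  rcases lt_or_ge (j : ℕ) (2 ^ t) with h | h
  · have hj : j = lo ⟨(j : ℕ), h⟩ := by ext; rfl
    rw [hj, hsplit, concat_lo]
    simp [Rmat_lo_lo, Rmat_hi_lo ht, Matrix.vecMul, dotProduct]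
  · have hj : j = hi ⟨(j : ℕ) - 2 ^ t, by
        have := j.isLt; have := two_pow_succ' t; omega⟩ := by
      ext; simp [hi]; omega
    rw [hj, hsplit, concat_hi]
    simp [Rmat_hi_hi ht, Rmat_lo_hi ht, Matrix.vecMul, dotProduct]

/-- `BW t` is closed under addition. -/
lemma BW_add : ∀ t : ℕ, ∀ x y : Fin (2 ^ t) → ℝ, x ∈ BW t → y ∈ BW t → x + y ∈ BW t
  | 0, x, y, hx, hy => by
    intro i
    obtain ⟨a, ha⟩ := hx i
    obtain ⟨b, hb⟩ := hy i
    exact ⟨a + b, by simp [Pi.add_apply, ha, hb]⟩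
  | (t + 1), x, y, hx, hy => by
    obtain ⟨u, v, hu, ⟨w, hw, hv⟩, hxeq⟩ := hx
    obtain ⟨u', v', hu', ⟨w', hw', hv'⟩, hyeq⟩ := hy
    refine ⟨u + u', v + v', BW_add t _ _ hu hu',
      ⟨w + w', BW_add t _ _ hw hw', by rw [hv, hv', Matrix.add_vecMul]⟩, ?_⟩
    rw [hxeq, hyeq, concat_add]
    congr 1
    abel

/-- `BW t` is closed under right multiplication by `R` for `t ≥ 1`. -/
lemma BW_R : ∀ t : ℕ, 1 ≤ t → ∀ x ∈ BW t, Matrix.vecMul x (Rmat (2 ^ t)) ∈ BW t := by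
  intro t
  induction t with
  | zero => omega
  | succ s ih =>
    intro _ x hx
    obtain ⟨u, v, hu, ⟨w, hw, hv⟩, hxeq⟩ := hx
    rcases Nat.eq_zero_or_pos s with rfl | hs
    · -- base case: dimension 2
      subst hxeq
      have hv1 : v = w := by rw [hv, Rmat_one, Matrix.vecMul_one]
      subst hv1
      obtain ⟨a, ha⟩ := hu 0
      obtain ⟨b, hb⟩ := hw 0
      have hu' : ∀ i : Fin 1, u i = (a : ℝ) := fun i => by rw [Subsingleton.elim i 0, ha]
      have hw' : ∀ i : Fin 1, v i = (b : ℝ) := fun i => by rw [Subsingleton.elim i 0, hb]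
      refine ⟨fun _ => ((2 * a + b : ℤ) : ℝ), fun _ => ((-2 * a - 2 * b : ℤ) : ℝ),
        fun i => ⟨2 * a + b, rfl⟩,
        ⟨fun _ => ((-2 * a - 2 * b : ℤ) : ℝ), fun i => ⟨-2 * a - 2 * b, rfl⟩,
          by rw [Rmat_one, Matrix.vecMul_one]⟩, ?_⟩
      funext j
      have h0 : concat u (u + v) 0 = (a : ℝ) := by
        have : (0 : Fin (2 ^ (0 + 1))) = lo (0 : Fin 1) := rfl
        rw [this, concat_lo, hu']
      have h1 : concat u (u + v) 1 = (a : ℝ) + (b : ℝ) := by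
        have : (1 : Fin (2 ^ (0 + 1))) = hi (0 : Fin 1) := rfl
        rw [this, concat_hi, Pi.add_apply, hu', hw']
      rw [Matrix.vecMul, dotProduct]
      fin_cases j <;>
        simp [Fin.sum_univ_two, h0, h1, Rmat, concat, Pi.add_apply, hu', hw'] <;>
        push_cast <;> ring
    · subst hxeq
      subst hv
      rw [vecMul_concat hs, Matrix.add_vecMul]
      exact ⟨Matrix.vecMul u (Rmat (2 ^ s)),
        Matrix.vecMul (Matrix.vecMul w (Rmat (2 ^ s))) (Rmat (2 ^ s)),
        ih hs u hu,
        ⟨Matrix.vecMul w (Rmat (2 ^ s)), ih hs w hw, rfl⟩, rfl⟩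

/-- If `(x₁, x₂) ∈ BW_{2n}`, then `x₁ ∈ BW_n`, `x₂ ∈ BW_n`, and
`x₂ − x₁ ∈ RBW_n`. -/
theorem bw_halves :
    ∀ t : ℕ, 1 ≤ t → ∀ x₁ x₂ : Fin (2 ^ t) → ℝ,
      concat x₁ x₂ ∈ BW (t + 1) →
      x₁ ∈ BW t ∧ x₂ ∈ BW t ∧ x₂ - x₁ ∈ RBW t := by
  intro t ht x₁ x₂ hx
  obtain ⟨u, v, hu, ⟨w, hw, hv⟩, hxeq⟩ := hx
  obtain ⟨h1, h2⟩ := concat_inj hxeq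
  subst h1
  subst h2
  have hvBW : v ∈ BW t := hv ▸ BW_R t ht w hw
  refine ⟨hu, BW_add t _ _ hu hvBW, ?_⟩
  have : x₁ + v - x₁ = v := by abel
  rw [this]
  exact ⟨w, hw, hv.symm⟩
end
end

section
/- For every t ≥ 1 and n = 2^t, the Barnes–Wall lattice BW_n is a full-rank lattice in ℝⁿ: it is an additive subgroup of ℝⁿ satisfying BW_n ⊆ ℤⁿ (hence discrete), it is a free ℤ-module of rank n, and its ℝ-linear span is all of ℝⁿ. -/
/-!
`BW_{2^t}` is the `ℤ`-row span of an integer matrix `G_t`: `G_0 = I` and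
`G_{t+1} = [[G_t, G_t], [0, G_t R]]` up to reindexing. Its determinant `det (G_t)² · det R` is
nonzero because `R(n) = I ⊗ R(2)` has determinant `(-2)^{n/2}`. The `ℤ`-row span of a nonsingular
integer matrix is an additive subgroup of `ℤⁿ` whose real span is all of `ℝⁿ`.
-/

open Matrix

noncomputable section

open scoped Kronecker

section IntRowSpan

variable {ι κ : Type*} [Fintype ι]

theorem setOf_intCast_vecMul_eq_span_range_row (B : Matrix ι κ ℝ) :
    {x | ∃ z : ι → ℤ, x = (fun i => (z i : ℝ)) ᵥ* B} =
      (Submodule.span ℤ (Set.range B.row) : Set (κ → ℝ)) := by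
  ext x
  rw [SetLike.mem_coe, Submodule.mem_span_range_iff_exists_fun]
  simp only [Set.mem_ofPred_eq, vecMul_eq_sum, row, Int.cast_smul_eq_zsmul, eq_comm]

theorem span_span_int_range_row_eq_top [DecidableEq ι] {B : Matrix ι ι ℝ} (hB : B.det ≠ 0) :
    Submodule.span ℝ (Submodule.span ℤ (Set.range B.row) : Set (ι → ℝ)) = ⊤ := by
  rw [Submodule.span_span_of_tower, ← range_vecMulLinear, LinearMap.range_eq_top]
  exact vecMul_surjective_iff_isUnit.2 ((isUnit_iff_isUnit_det B).2 hB.isUnit)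

theorem intCast_vecMul_map_intCast_apply (z : ι → ℤ) (G : Matrix ι κ ℤ) (j : κ) :
    ((fun i => (z i : ℝ)) ᵥ* G.map (Int.castRingHom ℝ)) j = ((z ᵥ* G) j : ℝ) :=
  (RingHom.map_vecMul (Int.castRingHom ℝ) G z j).symm

end IntRowSpan

/-- `Rmat` over an arbitrary ring, so that the generator matrices below can be built over `ℤ`. -/
def blockHadamard (R : Type*) [Ring R] (n : ℕ) : Matrix (Fin n) (Fin n) R :=
  Matrix.of fun i j =>
    if (i : ℕ) / 2 = (j : ℕ) / 2 then
      if (i : ℕ) % 2 = 1 ∧ (j : ℕ) % 2 = 1 then -1 else 1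
    else 0

theorem Rmat_eq_blockHadamard (n : ℕ) : Rmat n = blockHadamard ℝ n := rfl

theorem blockHadamard_map {R S : Type*} [Ring R] [Ring S] (f : R →+* S) (n : ℕ) :
    (blockHadamard R n).map f = blockHadamard S n := by
  ext i j
  simp only [blockHadamard, map_apply, of_apply]
  split_ifs <;> simp

theorem blockHadamard_mul_two_eq_reindex_kronecker (R : Type*) [Ring R] (m : ℕ) :
    blockHadamard R (m * 2) = reindex finProdFinEquiv finProdFinEquiv
      ((1 : Matrix (Fin m) (Fin m) R) ⊗ₖ !![1, 1; 1, -1]) := by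
  ext i j
  obtain ⟨⟨a, b⟩, rfl⟩ := finProdFinEquiv.surjective i
  obtain ⟨⟨c, d⟩, rfl⟩ := finProdFinEquiv.surjective j
  simp only [blockHadamard, reindex_apply, submatrix_apply, Equiv.symm_apply_apply,
    kroneckerMap_apply, one_apply, of_apply, finProdFinEquiv_apply_val]
  have hdiv (k : ℕ) : (1 + 2 * k) / 2 = k := by omega
  fin_cases b <;> fin_cases d <;> simp [Fin.ext_iff, hdiv, neg_ite]

theorem det_blockHadamard_two_pow_ne_zero (t : ℕ) : (blockHadamard ℤ (2 ^ t)).det ≠ 0 := by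
  cases t with
  | zero => decide
  | succ t =>
    rw [pow_succ, blockHadamard_mul_two_eq_reindex_kronecker, det_reindex_self, det_kronecker,
      det_one, det_fin_two_of]
    norm_num

def finTwoPowSuccEquiv (t : ℕ) : Fin (2 ^ t) ⊕ Fin (2 ^ t) ≃ Fin (2 ^ (t + 1)) :=
  finSumFinEquiv.trans (finCongr (Nat.two_pow_succ t).symm)

theorem concat_eq_sum_elim_comp {t : ℕ} (u v : Fin (2 ^ t) → ℝ) :
    concat u v = Sum.elim u v ∘ (finTwoPowSuccEquiv t).symm := by
  funext i
  simp only [concat, finTwoPowSuccEquiv, Function.comp_apply, Equiv.symm_trans_apply,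
    finCongr_symm, finCongr_apply]
  split_ifs with h
  · rw [show Fin.cast _ i = Fin.castAdd (2 ^ t) ⟨i, h⟩ from rfl,
      finSumFinEquiv_symm_apply_castAdd, Sum.elim_inl]
  · rw [show Fin.cast _ i = Fin.natAdd (2 ^ t) ⟨i - 2 ^ t, _⟩ from Fin.ext (by simp; omega),
      finSumFinEquiv_symm_apply_natAdd, Sum.elim_inr]

theorem sum_elim_comp_vecMul_reindex_fromBlocks {ι ι' κ μ μ' ν α : Type*} [Fintype ι]
    [Fintype ι'] [Fintype κ] [NonUnitalNonAssocSemiring α] (e : ι ⊕ ι' ≃ κ) (f : μ ⊕ μ' ≃ ν)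
    (a : ι → α) (b : ι' → α) (A : Matrix ι μ α) (B : Matrix ι μ' α) (C : Matrix ι' μ α)
    (D : Matrix ι' μ' α) :
    (Sum.elim a b ∘ e.symm) ᵥ* reindex e f (fromBlocks A B C D) =
      Sum.elim (a ᵥ* A + b ᵥ* C) (a ᵥ* B + b ᵥ* D) ∘ f.symm := by
  rw [reindex_apply, submatrix_vecMul_equiv, Function.comp_assoc, Equiv.symm_symm,
    Equiv.symm_comp_self, Function.comp_id, vecMul_fromBlocks]
  rfl

/-- The rows of `[[G, G], [0, G * R]]` span `{(u, u + v)}`: the top rows give the vectors `(u, u)`,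
the bottom ones the vectors `(0, v)` with `v ∈ RBW`. -/
def bwGenMatrix : (t : ℕ) → Matrix (Fin (2 ^ t)) (Fin (2 ^ t)) ℤ
  | 0 => 1
  | t + 1 => reindex (finTwoPowSuccEquiv t) (finTwoPowSuccEquiv t)
      (fromBlocks (bwGenMatrix t) (bwGenMatrix t) 0 (bwGenMatrix t * blockHadamard ℤ (2 ^ t)))

theorem det_bwGenMatrix_ne_zero (t : ℕ) : (bwGenMatrix t).det ≠ 0 := by
  induction t with
  | zero => simp [bwGenMatrix]
  | succ t ih =>
    rw [bwGenMatrix, det_reindex_self, det_fromBlocks_zero₂₁, det_mul]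
    exact mul_ne_zero ih (mul_ne_zero ih (det_blockHadamard_two_pow_ne_zero t))

theorem BW_succ (t : ℕ) :
    BW (t + 1) = {x | ∃ u ∈ BW t, ∃ w ∈ BW t, x = concat u (u + w ᵥ* Rmat (2 ^ t))} := by
  ext x
  simp only [BW, Set.mem_ofPred_eq]
  constructor
  · rintro ⟨u, _, hu, ⟨w, hw, rfl⟩, rfl⟩
    exact ⟨u, hu, w, hw, rfl⟩
  · rintro ⟨u, hu, w, hw, rfl⟩
    exact ⟨u, _, hu, ⟨w, hw, rfl⟩, rfl⟩

theorem BW_eq_setOf_intCast_vecMul_bwGenMatrix (t : ℕ) :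
    BW t = {x | ∃ z : Fin (2 ^ t) → ℤ,
      x = (fun i => (z i : ℝ)) ᵥ* (bwGenMatrix t).map (Int.castRingHom ℝ)} := by
  induction t with
  | zero =>
    ext x
    simp only [BW, bwGenMatrix, Matrix.map_one _ (map_zero _) (map_one _), vecMul_one,
      Set.mem_ofPred_eq, funext_iff]
    exact Classical.skolem
  | succ t ih =>
    set e := finTwoPowSuccEquiv t
    set B := (bwGenMatrix t).map (Int.castRingHom ℝ)
    have hmap : (bwGenMatrix (t + 1)).map (Int.castRingHom ℝ) =
        reindex e e (fromBlocks B B 0 (B * Rmat (2 ^ t))) := by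
      rw [bwGenMatrix, reindex_apply, ← submatrix_map, fromBlocks_map, Matrix.map_mul,
        blockHadamard_map, Matrix.map_zero _ (map_zero _), Rmat_eq_blockHadamard]
      rfl
    have key (z₁ z₂ : Fin (2 ^ t) → ℤ) :
        (fun i => ((Sum.elim z₁ z₂ ∘ e.symm) i : ℝ)) ᵥ*
            (bwGenMatrix (t + 1)).map (Int.castRingHom ℝ) =
          concat ((fun i => (z₁ i : ℝ)) ᵥ* B)
            ((fun i => (z₁ i : ℝ)) ᵥ* B + ((fun i => (z₂ i : ℝ)) ᵥ* B) ᵥ* Rmat (2 ^ t)) := by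
      have hcast : (fun i => ((Sum.elim z₁ z₂ ∘ e.symm) i : ℝ)) =
          Sum.elim (fun i => (z₁ i : ℝ)) (fun i => (z₂ i : ℝ)) ∘ e.symm := by
        ext i; simp only [Function.comp_apply]; cases e.symm i <;> rfl
      rw [hmap, hcast, sum_elim_comp_vecMul_reindex_fromBlocks, concat_eq_sum_elim_comp,
        vecMul_zero, add_zero, vecMul_vecMul]
    rw [BW_succ, ih]
    ext x
    constructor
    · rintro ⟨_, ⟨z₁, rfl⟩, _, ⟨z₂, rfl⟩, rfl⟩
      exact ⟨Sum.elim z₁ z₂ ∘ e.symm, (key z₁ z₂).symm⟩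
    · rintro ⟨z, rfl⟩
      have hz : z = Sum.elim (z ∘ e ∘ Sum.inl) (z ∘ e ∘ Sum.inr) ∘ e.symm := by
        ext i
        obtain ⟨s, rfl⟩ := e.surjective i
        cases s <;> simp
      rw [hz, key]
      exact ⟨_, ⟨_, rfl⟩, _, ⟨_, rfl⟩, rfl⟩

/-- `BW_n` is a full-rank lattice in `ℝⁿ`: an additive subgroup of
`ℝⁿ` contained in `ℤⁿ` (hence discrete), a free `ℤ`-module of rank `n` (it is the
`ℤ`-row span of an invertible `n × n` matrix), and its `ℝ`-linear span is `ℝⁿ`. -/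
theorem bw_is_full_rank_lattice :
    ∀ t : ℕ, 1 ≤ t →
      (∃ S : AddSubgroup (Fin (2 ^ t) → ℝ), (S : Set (Fin (2 ^ t) → ℝ)) = BW t) ∧
      (∀ x ∈ BW t, ∀ i, ∃ z : ℤ, x i = (z : ℝ)) ∧
      (∃ B : Matrix (Fin (2 ^ t)) (Fin (2 ^ t)) ℝ, B.det ≠ 0 ∧
        BW t = {x | ∃ z : Fin (2 ^ t) → ℤ,
          x = Matrix.vecMul (fun i => (z i : ℝ)) B}) ∧
      Submodule.span ℝ (BW t) = ⊤ := by
  intro t _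
  set B := (bwGenMatrix t).map (Int.castRingHom ℝ)
  have hBW : BW t = {x | ∃ z : Fin (2 ^ t) → ℤ, x = (fun i => (z i : ℝ)) ᵥ* B} :=
    BW_eq_setOf_intCast_vecMul_bwGenMatrix t
  have hdet : B.det ≠ 0 := fun h => det_bwGenMatrix_ne_zero t <|
    Int.cast_eq_zero.1 ((Int.cast_det (R := ℝ) (bwGenMatrix t)).trans h)
  have hspan : BW t = Submodule.span ℤ (Set.range B.row) := by
    rw [hBW, setOf_intCast_vecMul_eq_span_range_row]
  refine ⟨⟨(Submodule.span ℤ (Set.range B.row)).toAddSubgroup, hspan.symm⟩, ?_, ⟨B, hdet, hBW⟩, ?_⟩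
  · rw [hBW]
    rintro _ ⟨z, rfl⟩ i
    exact ⟨(z ᵥ* bwGenMatrix t) i, intCast_vecMul_map_intCast_apply z (bwGenMatrix t) i⟩
  · rw [hspan]
    exact span_span_int_range_row_eq_top hdet
end
end

section
/- For every t ≥ 1 and n = 2^t, the covolume (fundamental volume) of the Barnes–Wall lattice BW_n ⊆ ℝⁿ equals (n/2)^{n/4}; equivalently, vol(BW_{2n}) = 2^{n/2}·vol(BW_n)² with vol(BW_2) = 1. -/
open Matrix

noncomputable section

/-- `B` is (the matrix of) a `ℤ`-basis of `Λ`: `B` is invertible and `Λ` is the set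
of integer combinations of the rows of `B`. The covolume of `Λ` is then `|det B|`. -/
def IsZBasis {m : ℕ} (B : Matrix (Fin m) (Fin m) ℝ) (Λ : Set (Fin m → ℝ)) : Prop :=
  B.det ≠ 0 ∧
    Λ = {x | ∃ z : Fin m → ℤ, x = Matrix.vecMul (fun i => (z i : ℝ)) B}

/-!
Doubling the dimension, a `ℤ`-basis `B` of `BW_n` yields the `ℤ`-basis `[[B, B], [0, B R(n)]]`
of `BW_{2n}`, so `vol(BW_{2n}) = vol(BW_n)² |det R(n)|`, and `det R(n) = det(I_{n/2} ⊗ R(2)) =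
(-2)^{n/2}`. Solving this recursion from `vol(BW_2) = 1` gives `(n/2)^{n/4}`. The covolume does
not depend on the basis: two `ℤ`-bases of one lattice are related by integer matrices in both
directions, and a nonzero integer determinant has absolute value at least `1`.
-/

section IntRowSpan

variable {ι : Type*} [Fintype ι]

def intRowSpan (B : Matrix ι ι ℝ) : Set (ι → ℝ) :=
  {x | ∃ z : ι → ℤ, x = vecMul (fun i => (z i : ℝ)) B}

lemma row_mem_intRowSpan [DecidableEq ι] (B : Matrix ι ι ℝ) (i : ι) : B i ∈ intRowSpan B :=
  ⟨Pi.single i 1, by ext j; simp [vecMul, dotProduct, Pi.single_apply]⟩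

lemma exists_intCast_mul_eq_of_rows_mem {B C : Matrix ι ι ℝ}
    (hC : ∀ i, C i ∈ intRowSpan B) : ∃ Z : Matrix ι ι ℤ, C = Z.map (Int.cast) * B := by
  choose z hz using hC
  refine ⟨of z, ?_⟩
  ext i j
  rw [hz i]
  simp [vecMul, dotProduct, mul_apply]

lemma abs_det_le_of_rows_mem [DecidableEq ι] {B C : Matrix ι ι ℝ} (hC : ∀ i, C i ∈ intRowSpan B)
    (hdet : C.det ≠ 0) : |B.det| ≤ |C.det| := by
  obtain ⟨Z, rfl⟩ := exists_intCast_mul_eq_of_rows_mem hC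
  have hZ : (Z.map (Int.cast : ℤ → ℝ)).det = (Z.det : ℝ) := (Int.castRingHom ℝ).map_det Z |>.symm
  rw [det_mul, hZ] at hdet ⊢
  have hZ1 : (1 : ℝ) ≤ |(Z.det : ℝ)| := by
    exact_mod_cast Int.one_le_abs (by exact_mod_cast left_ne_zero_of_mul hdet)
  rw [abs_mul]
  exact le_mul_of_one_le_left (abs_nonneg _) hZ1

end IntRowSpan

section IsZBasis

variable {m : ℕ} {Λ : Set (Fin m → ℝ)} {B C : Matrix (Fin m) (Fin m) ℝ}

lemma IsZBasis.row_mem_intRowSpan (hB : IsZBasis B Λ) (hC : IsZBasis C Λ) (i : Fin m) :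
    C i ∈ intRowSpan B := by
  have h := _root_.row_mem_intRowSpan C i
  unfold intRowSpan at h ⊢
  rwa [← hC.2, hB.2] at h

lemma IsZBasis.abs_det_eq (hB : IsZBasis B Λ) (hC : IsZBasis C Λ) : |B.det| = |C.det| :=
  le_antisymm (abs_det_le_of_rows_mem (hB.row_mem_intRowSpan hC) hC.1)
    (abs_det_le_of_rows_mem (hC.row_mem_intRowSpan hB) hB.1)

end IsZBasis

open scoped Kronecker in
lemma Rmat_mul_two (m : ℕ) :
    Rmat (m * 2) = reindex finProdFinEquiv finProdFinEquiv
      ((1 : Matrix (Fin m) (Fin m) ℝ) ⊗ₖ !![1, 1; 1, -1]) := by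
  ext i j
  obtain ⟨⟨a, b⟩, rfl⟩ := finProdFinEquiv.surjective i
  obtain ⟨⟨c, d⟩, rfl⟩ := finProdFinEquiv.surjective j
  fin_cases b <;> fin_cases d <;>
    simp [Rmat, one_apply, Fin.ext_iff, Nat.add_mul_div_left, Nat.add_mod, apply_ite]

lemma det_Rmat_mul_two (m : ℕ) : (Rmat (m * 2)).det = (-2) ^ m := by
  rw [Rmat_mul_two, det_reindex_self, det_kronecker, det_fin_two_of]
  norm_num

lemma abs_det_Rmat_two_pow (t : ℕ) : |(Rmat (2 ^ t)).det| = 2 ^ (2 ^ t / 2) := by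
  cases t with
  | zero => simp [Rmat]
  | succ t => rw [pow_succ, det_Rmat_mul_two, abs_pow, Nat.mul_div_cancel _ two_pos]; norm_num

def halvesEquiv (t : ℕ) : Fin (2 ^ t) ⊕ Fin (2 ^ t) ≃ Fin (2 ^ (t + 1)) :=
  finSumFinEquiv.trans (finCongr (by ring))

lemma concat_eq_sumElim {t : ℕ} (u v : Fin (2 ^ t) → ℝ) :
    concat u v = Sum.elim u v ∘ (halvesEquiv t).symm := by
  funext j
  obtain ⟨p, rfl⟩ := (halvesEquiv t).surjective j
  rw [Function.comp_apply, Equiv.symm_apply_apply]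
  cases p with
  | inl a => simp [concat, halvesEquiv]
  | inr a => simp [concat, halvesEquiv]

def bwBasis : ∀ t : ℕ, Matrix (Fin (2 ^ t)) (Fin (2 ^ t)) ℝ
  | 0 => 1
  | (t + 1) => reindex (halvesEquiv t) (halvesEquiv t)
      (fromBlocks (bwBasis t) (bwBasis t) 0 (bwBasis t * Rmat (2 ^ t)))

lemma vecMul_bwBasis_succ {t : ℕ} (y : Fin (2 ^ (t + 1)) → ℝ) :
    vecMul y (bwBasis (t + 1)) =
      concat (vecMul (y ∘ halvesEquiv t ∘ Sum.inl) (bwBasis t))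
        (vecMul (y ∘ halvesEquiv t ∘ Sum.inl) (bwBasis t) +
          vecMul (y ∘ halvesEquiv t ∘ Sum.inr) (bwBasis t * Rmat (2 ^ t))) := by
  rw [concat_eq_sumElim, bwBasis, reindex_apply, submatrix_vecMul_equiv, Equiv.symm_symm,
    vecMul_fromBlocks, vecMul_zero, add_zero]
  rfl

lemma abs_det_bwBasis_succ (t : ℕ) :
    |(bwBasis (t + 1)).det| = 2 ^ (2 ^ t / 2) * |(bwBasis t).det| ^ 2 := by
  rw [bwBasis, det_reindex_self, det_fromBlocks_zero₂₁, det_mul, abs_mul, abs_mul,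
    abs_det_Rmat_two_pow]
  ring

lemma det_bwBasis_ne_zero : ∀ t, (bwBasis t).det ≠ 0
  | 0 => by simp [bwBasis]
  | (t + 1) => by
    rw [← abs_ne_zero, abs_det_bwBasis_succ]
    exact mul_ne_zero (by positivity) (pow_ne_zero _ (abs_ne_zero.mpr (det_bwBasis_ne_zero t)))

lemma BW_succ_eq_intRowSpan {t : ℕ} (h : BW t = intRowSpan (bwBasis t)) :
    BW (t + 1) = intRowSpan (bwBasis (t + 1)) := by
  ext x
  simp only [BW, intRowSpan, h, Set.mem_ofPred_eq]
  constructor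
  · rintro ⟨_, _, ⟨z₁, rfl⟩, ⟨_, ⟨z₂, rfl⟩, rfl⟩, rfl⟩
    refine ⟨Sum.elim z₁ z₂ ∘ (halvesEquiv t).symm, ?_⟩
    simp [vecMul_bwBasis_succ, vecMul_vecMul, Function.comp_def]
  · rintro ⟨z, rfl⟩
    exact ⟨_, _, ⟨_, rfl⟩, ⟨_, ⟨_, rfl⟩, (vecMul_vecMul _ _ _).symm⟩, vecMul_bwBasis_succ _⟩

lemma bwBasis_isZBasis (t : ℕ) : IsZBasis (bwBasis t) (BW t) := by
  refine ⟨det_bwBasis_ne_zero t, ?_⟩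
  induction t with
  | zero =>
    ext x
    simp only [BW, bwBasis, vecMul_one, Set.mem_ofPred_eq]
    exact ⟨fun h => ⟨fun i => (h i).choose, funext fun i => (h i).choose_spec⟩,
      fun ⟨z, hz⟩ i => ⟨z i, congrFun hz i⟩⟩
  | succ t ih => exact BW_succ_eq_intRowSpan ih

lemma abs_det_bwBasis (k : ℕ) : |(bwBasis (k + 1)).det| = (2 ^ k : ℝ) ^ (2 ^ k / 2) := by
  induction k with
  | zero => simp [bwBasis, Rmat]
  | succ k ih =>
    rw [abs_det_bwBasis_succ, ih]
    cases k with
    | zero => norm_num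
    | succ k =>
      simp only [pow_succ, Nat.mul_div_cancel _ two_pos, mul_pow, ← pow_mul]
      ring

lemma div_two_rpow_div_four_eq (k : ℕ) :
    ((2 ^ (k + 1) : ℝ) / 2) ^ ((2 ^ (k + 1) : ℝ) / 4) = (2 ^ k : ℝ) ^ (2 ^ k / 2) := by
  cases k with
  | zero => norm_num
  | succ k =>
    rw [show ((2 : ℝ) ^ (k + 2)) / 4 = ((2 ^ (k + 1) / 2 : ℕ) : ℝ) by
      rw [pow_succ 2 k, Nat.mul_div_cancel _ two_pos]; push_cast; ring, Real.rpow_natCast]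
    ring

/-- `BW_n` has a `ℤ`-basis, and its covolume (the absolute value of
the determinant of any `ℤ`-basis matrix) equals `(n/2)^{n/4}`; equivalently,
`vol(BW_{2n}) = 2^{n/2}·vol(BW_n)²` with `vol(BW_2) = 1`. -/
theorem bw_covolume :
    ∀ t : ℕ, 1 ≤ t →
      (∃ B : Matrix (Fin (2 ^ t)) (Fin (2 ^ t)) ℝ, IsZBasis B (BW t)) ∧
      (∀ B : Matrix (Fin (2 ^ t)) (Fin (2 ^ t)) ℝ, IsZBasis B (BW t) →
        |B.det| = ((2 ^ t : ℝ) / 2) ^ ((2 ^ t : ℝ) / 4)) ∧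
      (∀ B : Matrix (Fin (2 ^ t)) (Fin (2 ^ t)) ℝ,
       ∀ B' : Matrix (Fin (2 ^ (t + 1))) (Fin (2 ^ (t + 1))) ℝ,
        IsZBasis B (BW t) → IsZBasis B' (BW (t + 1)) →
        |B'.det| = (2 : ℝ) ^ (2 ^ t / 2) * |B.det| ^ 2) ∧
      (∀ B : Matrix (Fin (2 ^ 1)) (Fin (2 ^ 1)) ℝ, IsZBasis B (BW 1) →
        |B.det| = 1) := by
  intro t ht
  obtain ⟨k, rfl⟩ : ∃ k, t = k + 1 := ⟨t - 1, by omega⟩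
  refine ⟨⟨_, bwBasis_isZBasis _⟩, fun B hB => ?_, fun B B' hB hB' => ?_, fun B hB => ?_⟩
  · rw [← (bwBasis_isZBasis _).abs_det_eq hB, abs_det_bwBasis, div_two_rpow_div_four_eq]
  · rw [← (bwBasis_isZBasis _).abs_det_eq hB, ← (bwBasis_isZBasis _).abs_det_eq hB',
      abs_det_bwBasis_succ]
  · rw [← (bwBasis_isZBasis _).abs_det_eq hB, abs_det_bwBasis 0]
    norm_num
end
end

section
/- Let t ≥ 1, n = 2^t, y = (y₁, y₂) ∈ ℝ^{2n}, and let x = (u, u+v) ∈ BW_{2n} with u ∈ BW_n and v ∈ RBW_n. Then the relative squared distances satisfy ‖y − x‖²/d(BW_{2n}) = (1/2)·‖y₁ − u‖²/d(BW_n) + ‖(y₂ − u) − v‖²/d(RBW_n). -/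
open Matrix

noncomputable section

/-! ### Auxiliary lemmas -/

lemma Rmat_apply {n : ℕ} (i j : Fin n) :
    Rmat n i j = if (i : ℕ) / 2 = (j : ℕ) / 2 then
      if (i : ℕ) % 2 = 1 ∧ (j : ℕ) % 2 = 1 then -1 else 1
    else 0 := rfl

lemma vecMul_Rmat_apply {m : ℕ} (x : Fin (m*2) → ℝ) (j : Fin (m*2)) :
    Matrix.vecMul x (Rmat (m*2)) j =
      if h : (j:ℕ) % 2 = 0 then x j + x ⟨(j:ℕ)+1, by have := j.isLt; omega⟩
      else x ⟨(j:ℕ)-1, by have := j.isLt; omega⟩ - x j := by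
  have hj := j.isLt
  have hlt1 : 2*((j:ℕ)/2) < m*2 := by omega
  have hlt2 : 2*((j:ℕ)/2)+1 < m*2 := by omega
  have key : Matrix.vecMul x (Rmat (m*2)) j =
      x ⟨2*((j:ℕ)/2), hlt1⟩ * Rmat (m*2) ⟨2*((j:ℕ)/2), hlt1⟩ j
      + x ⟨2*((j:ℕ)/2)+1, hlt2⟩ * Rmat (m*2) ⟨2*((j:ℕ)/2)+1, hlt2⟩ j := by
    rw [Matrix.vecMul, dotProduct]
    refine Finset.sum_eq_add_of_mem _ _ (Finset.mem_univ _) (Finset.mem_univ _) ?_ ?_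
    · intro h; rw [Fin.mk.injEq] at h; omega
    · intro c _ hc
      have h1 : ¬ ((c:ℕ)/2 = (j:ℕ)/2) := by
        rcases hc with ⟨h1, h2⟩
        rw [Fin.ne_iff_vne] at h1 h2
        simp only [Fin.val_mk] at h1 h2
        omega
      rw [Rmat_apply, if_neg h1, mul_zero]
  rcases Nat.mod_two_eq_zero_or_one (j:ℕ) with h | h
  · have h0 : (j:ℕ) % 2 = 0 := h
    have e1 : (⟨2*((j:ℕ)/2), hlt1⟩ : Fin (m*2)) = j := by
      apply Fin.ext; simp only [Fin.val_mk]; omega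
    have r1 : Rmat (m*2) ⟨2*((j:ℕ)/2), hlt1⟩ j = 1 := by
      rw [Rmat_apply]; simp only [Fin.val_mk]
      rw [if_pos (by omega), if_neg (by omega)]
    have r2 : Rmat (m*2) ⟨2*((j:ℕ)/2)+1, hlt2⟩ j = 1 := by
      rw [Rmat_apply]; simp only [Fin.val_mk]
      rw [if_pos (by omega), if_neg (by omega)]
    have e2 : (⟨2*((j:ℕ)/2)+1, hlt2⟩ : Fin (m*2)) = ⟨(j:ℕ)+1, by omega⟩ := by
      apply Fin.ext; simp only [Fin.val_mk]; omega
    rw [key, r1, r2, e1, e2, dif_pos h0, mul_one, mul_one]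
  · have h0 : ¬ ((j:ℕ) % 2 = 0) := by omega
    have e1 : (⟨2*((j:ℕ)/2), hlt1⟩ : Fin (m*2)) = ⟨(j:ℕ)-1, by omega⟩ := by
      apply Fin.ext; simp only [Fin.val_mk]; omega
    have e2 : (⟨2*((j:ℕ)/2)+1, hlt2⟩ : Fin (m*2)) = j := by
      apply Fin.ext; simp only [Fin.val_mk]; omega
    have r1 : Rmat (m*2) ⟨2*((j:ℕ)/2), hlt1⟩ j = 1 := by
      rw [Rmat_apply]; simp only [Fin.val_mk]
      rw [if_pos (by omega), if_neg (by omega)]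
    have r2 : Rmat (m*2) ⟨2*((j:ℕ)/2)+1, hlt2⟩ j = -1 := by
      rw [Rmat_apply]; simp only [Fin.val_mk]
      rw [if_pos (by omega), if_pos (by omega)]
    rw [key, r1, r2, e1, e2, dif_neg h0]
    ring

lemma sum_pairs (m : ℕ) (f : Fin (m*2) → ℝ) :
    ∑ j, f j = ∑ k : Fin m,
      (f ⟨2*(k:ℕ), by have := k.isLt; omega⟩ + f ⟨2*(k:ℕ)+1, by have := k.isLt; omega⟩) := by
  rw [← Fintype.sum_equiv (finProdFinEquiv : Fin m × Fin 2 ≃ Fin (m*2))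
      (fun p => f (finProdFinEquiv p)) f (fun p => rfl)]
  rw [Fintype.sum_prod_type]
  refine Finset.sum_congr rfl fun k _ => ?_
  rw [Fin.sum_univ_two]
  congr 1 <;> · congr 1; apply Fin.ext; simp [finProdFinEquiv_apply_val]; try omega

lemma vecMul_Rmat_even0 {m : ℕ} (x : Fin (m*2) → ℝ) (jv : ℕ) (hj : jv < m*2)
    (h : jv % 2 = 0) :
    Matrix.vecMul x (Rmat (m*2)) ⟨jv, hj⟩ = x ⟨jv, hj⟩ + x ⟨jv+1, by omega⟩ := by
  rw [vecMul_Rmat_apply, dif_pos (show ((⟨jv,hj⟩ : Fin (m*2)):ℕ) % 2 = 0 from h)]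

lemma vecMul_Rmat_odd0 {m : ℕ} (x : Fin (m*2) → ℝ) (jv : ℕ) (hj : jv < m*2)
    (h : jv % 2 = 1) :
    Matrix.vecMul x (Rmat (m*2)) ⟨jv, hj⟩ = x ⟨jv-1, by omega⟩ - x ⟨jv, hj⟩ := by
  rw [vecMul_Rmat_apply, dif_neg (show ¬((⟨jv,hj⟩ : Fin (m*2)):ℕ) % 2 = 0 from by simp [h])]

lemma vecMul_Rmat_even {n m : ℕ} (hn : n = m*2) (x : Fin n → ℝ) (jv : ℕ) (hj : jv < n)
    (h : jv % 2 = 0) :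
    Matrix.vecMul x (Rmat n) ⟨jv, hj⟩ = x ⟨jv, hj⟩ + x ⟨jv+1, by omega⟩ := by
  subst hn; exact vecMul_Rmat_even0 x jv hj h

lemma vecMul_Rmat_odd {n m : ℕ} (hn : n = m*2) (x : Fin n → ℝ) (jv : ℕ) (hj : jv < n)
    (h : jv % 2 = 1) :
    Matrix.vecMul x (Rmat n) ⟨jv, hj⟩ = x ⟨jv-1, by omega⟩ - x ⟨jv, hj⟩ := by
  subst hn; exact vecMul_Rmat_odd0 x jv hj h

lemma sqnorm_vecMul_Rmat {n m : ℕ} (hn : n = m*2) (x : Fin n → ℝ) :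
    sqnorm (Matrix.vecMul x (Rmat n)) = 2 * sqnorm x := by
  subst hn
  rw [sqnorm, sqnorm, sum_pairs m (fun j => Matrix.vecMul x (Rmat (m*2)) j ^ 2),
    sum_pairs m (fun j => x j ^ 2), Finset.mul_sum]
  refine Finset.sum_congr rfl fun k _ => ?_
  have hk := k.isLt
  rw [vecMul_Rmat_even0 x _ _ (by omega), vecMul_Rmat_odd0 x _ _ (by omega)]
  rw [show (⟨2*(k:ℕ)+1-1, by omega⟩ : Fin (m*2)) = ⟨2*(k:ℕ), by omega⟩ from Fin.ext (by simp)]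
  ring

lemma vecMul_vecMul_Rmat {n m : ℕ} (hn : n = m*2) (x : Fin n → ℝ) :
    Matrix.vecMul (Matrix.vecMul x (Rmat n)) (Rmat n) = fun i => 2 * x i := by
  subst hn
  funext j
  obtain ⟨jv, hj⟩ := j
  rcases Nat.mod_two_eq_zero_or_one jv with h | h
  · rw [vecMul_Rmat_even0 _ _ _ h, vecMul_Rmat_even0 x _ _ h, vecMul_Rmat_odd0 x _ _ (by omega)]
    rw [show (⟨jv+1-1, by omega⟩ : Fin (m*2)) = ⟨jv, hj⟩ from Fin.ext (by simp only [Fin.val_mk]; omega)]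
    ring
  · rw [vecMul_Rmat_odd0 _ _ _ h, vecMul_Rmat_even0 x _ _ (by omega), vecMul_Rmat_odd0 x _ _ h]
    rw [show (⟨jv-1+1, by omega⟩ : Fin (m*2)) = ⟨jv, hj⟩ from Fin.ext (by simp only [Fin.val_mk]; omega)]
    ring

lemma concat_apply_lt {t : ℕ} (a b : Fin (2^t) → ℝ) (jv : ℕ) (hj : jv < 2^(t+1))
    (h : jv < 2^t) : concat a b ⟨jv, hj⟩ = a ⟨jv, h⟩ := by
  simp only [concat, Fin.val_mk, dif_pos h]

lemma concat_apply_ge {t : ℕ} (a b : Fin (2^t) → ℝ) (jv : ℕ) (hj : jv < 2^(t+1))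
    (h : ¬ jv < 2^t) : concat a b ⟨jv, hj⟩ = b ⟨jv - 2^t, by
      have h2 : 2 ^ (t + 1) = 2 ^ t + 2 ^ t := by rw [pow_succ]; ring
      omega⟩ := by
  simp only [concat, Fin.val_mk, dif_neg h]

lemma vecMul_Rmat_concat {r : ℕ} (a b : Fin (2^(r+1)) → ℝ) :
    Matrix.vecMul (concat a b) (Rmat (2^(r+1+1))) =
      concat (Matrix.vecMul a (Rmat (2^(r+1)))) (Matrix.vecMul b (Rmat (2^(r+1)))) := by
  have hpow : (2:ℕ)^(r+1) = 2^r * 2 := pow_succ 2 r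
  have hpow2 : (2:ℕ)^(r+1+1) = 2^(r+1) * 2 := pow_succ 2 (r+1)
  have h2s : 2 ≤ (2:ℕ)^(r+1) := by have := Nat.one_le_two_pow (n := r); omega
  have hse : (2:ℕ)^(r+1) % 2 = 0 := by omega
  funext j
  obtain ⟨jv, hj⟩ := j
  rcases Nat.mod_two_eq_zero_or_one jv with h | h
  · rw [vecMul_Rmat_even hpow2 (concat a b) jv hj h]
    by_cases hlt : jv < 2^(r+1)
    · rw [concat_apply_lt _ _ _ _ hlt, concat_apply_lt _ _ _ _ (by omega : jv+1 < 2^(r+1)),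
        concat_apply_lt _ _ _ _ hlt,
        vecMul_Rmat_even hpow a jv (by omega) h]
    · rw [concat_apply_ge _ _ _ _ hlt, concat_apply_ge _ _ _ _ (by omega : ¬ jv+1 < 2^(r+1)),
        concat_apply_ge _ _ _ _ hlt,
        vecMul_Rmat_even hpow b (jv - 2^(r+1)) (by omega) (by omega)]
      rw [show (⟨jv+1-2^(r+1), by omega⟩ : Fin (2^(r+1))) = ⟨jv-2^(r+1)+1, by omega⟩ from
        Fin.ext (by simp only [Fin.val_mk]; omega)]
  · rw [vecMul_Rmat_odd hpow2 (concat a b) jv hj h]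
    by_cases hlt : jv < 2^(r+1)
    · rw [concat_apply_lt _ _ _ _ hlt, concat_apply_lt _ _ _ _ (by omega : jv-1 < 2^(r+1)),
        concat_apply_lt _ _ _ _ hlt,
        vecMul_Rmat_odd hpow a jv (by omega) h]
    · rw [concat_apply_ge _ _ _ _ hlt, concat_apply_ge _ _ _ _ (by omega : ¬ jv-1 < 2^(r+1)),
        concat_apply_ge _ _ _ _ hlt,
        vecMul_Rmat_odd hpow b (jv - 2^(r+1)) (by omega) (by omega)]
      rw [show (⟨jv-1-2^(r+1), by omega⟩ : Fin (2^(r+1))) = ⟨jv-2^(r+1)-1, by omega⟩ from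
        Fin.ext (by simp only [Fin.val_mk]; omega)]

/-! ### sqnorm and concat lemmas -/

lemma sqnorm_nonneg {m : ℕ} (x : Fin m → ℝ) : 0 ≤ sqnorm x :=
  Finset.sum_nonneg fun _ _ => sq_nonneg _

lemma sqnorm_eq_zero_iff {m : ℕ} (x : Fin m → ℝ) : sqnorm x = 0 ↔ x = 0 := by
  rw [sqnorm, Finset.sum_eq_zero_iff_of_nonneg fun i _ => sq_nonneg _]
  constructor
  · intro h; funext i
    have := sq_eq_zero_iff.mp (h i (Finset.mem_univ i))
    simpa using this
  · intro h i _; rw [h]; simp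

lemma concat_sub {t : ℕ} (a b c d : Fin (2^t) → ℝ) :
    concat a b - concat c d = concat (a - c) (b - d) := by
  funext i
  simp only [Pi.sub_apply, concat]
  split_ifs <;> simp

lemma concat_add_s13 {t : ℕ} (a b c d : Fin (2^t) → ℝ) :
    concat a b + concat c d = concat (a + c) (b + d) := by
  funext i
  simp only [Pi.add_apply, concat]
  split_ifs <;> simp

lemma concat_eq_zero {t : ℕ} (a b : Fin (2^t) → ℝ) (ha : a = 0) (hb : b = 0) :
    concat a b = 0 := by
  funext i
  simp only [concat, ha, hb]
  split_ifs <;> simp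

lemma concat_fst_eq_zero {t : ℕ} {a b : Fin (2^t) → ℝ} (h : concat a b = 0) : a = 0 := by
  funext i
  have hi := i.isLt
  have h2 : 2 ^ (t + 1) = 2 ^ t + 2 ^ t := by rw [pow_succ]; ring
  have := congrFun h ⟨(i:ℕ), by omega⟩
  rw [concat_apply_lt a b _ _ hi] at this
  simpa using this

lemma sum_univ_dite {n : ℕ} (g : Fin n → ℝ) :
    ∑ i, g i = ∑ k ∈ Finset.range n, (if h : k < n then g ⟨k, h⟩ else 0) := by
  rw [← Fin.sum_univ_eq_sum_range]
  exact Finset.sum_congr rfl fun i _ => by rw [dif_pos i.isLt]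

lemma sqnorm_concat {t : ℕ} (a b : Fin (2^t) → ℝ) :
    sqnorm (concat a b) = sqnorm a + sqnorm b := by
  have h2 : 2 ^ (t + 1) = 2 ^ t + 2 ^ t := by rw [pow_succ]; ring
  rw [sqnorm, sum_univ_dite,
    show Finset.range (2^(t+1)) = Finset.range (2^t + 2^t) from by rw [← h2],
    Finset.sum_range_add]
  congr 1
  · rw [sqnorm, sum_univ_dite]
    refine Finset.sum_congr rfl fun k hk => ?_
    rw [Finset.mem_range] at hk
    rw [dif_pos (by omega : k < 2^(t+1)), dif_pos hk]
    simp only [concat, Fin.val_mk, dif_pos hk]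
  · rw [sqnorm, sum_univ_dite]
    refine Finset.sum_congr rfl fun k hk => ?_
    rw [Finset.mem_range] at hk
    rw [dif_pos (by omega : 2^t + k < 2^(t+1)), dif_pos hk]
    have hn : ¬ (2^t + k < 2^t) := by omega
    simp only [concat, Fin.val_mk, dif_neg hn]
    have he : 2^t + k - 2^t = k := by omega
    simp only [he]

lemma parallelogram {m : ℕ} (u v : Fin m → ℝ) :
    sqnorm u + sqnorm (u + v) = (sqnorm (fun i => 2 * u i + v i) + sqnorm v) / 2 := by
  rw [sqnorm, sqnorm, sqnorm, sqnorm, ← Finset.sum_add_distrib, ← Finset.sum_add_distrib,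
    Finset.sum_div]
  exact Finset.sum_congr rfl fun i _ => by simp only [Pi.add_apply]; ring

/-! ### BW lemmas -/

lemma mem_bw_succ {t : ℕ} (x : Fin (2^(t+1)) → ℝ) :
    x ∈ BW (t+1) ↔ ∃ u v : Fin (2 ^ t) → ℝ, u ∈ BW t ∧
      (∃ w ∈ BW t, v = Matrix.vecMul w (Rmat (2 ^ t))) ∧ x = concat u (u + v) := Iff.rfl

lemma bw_zero : ∀ t : ℕ, (0 : Fin (2^t) → ℝ) ∈ BW t := by
  intro t
  induction t with
  | zero => intro i; exact ⟨0, by simp⟩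
  | succ s ih =>
    refine (mem_bw_succ _).mpr ⟨0, 0, ih, ⟨0, ih, by rw [Matrix.zero_vecMul]⟩, ?_⟩
    rw [add_zero]
    exact (concat_eq_zero _ _ rfl rfl).symm

lemma bw_add : ∀ t : ℕ, ∀ x y : Fin (2^t) → ℝ, x ∈ BW t → y ∈ BW t → x + y ∈ BW t := by
  intro t
  induction t with
  | zero =>
    intro x y hx hy i
    obtain ⟨z1, hz1⟩ := hx i
    obtain ⟨z2, hz2⟩ := hy i
    exact ⟨z1 + z2, by simp [hz1, hz2]⟩
  | succ s ih =>
    intro x y hx hy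
    obtain ⟨u, v, hu, ⟨w, hw, hvw⟩, hx⟩ := (mem_bw_succ x).mp hx
    obtain ⟨u', v', hu', ⟨w', hw', hvw'⟩, hy⟩ := (mem_bw_succ y).mp hy
    refine (mem_bw_succ _).mpr ⟨u + u', v + v', ih u u' hu hu',
      ⟨w + w', ih w w' hw hw', by rw [hvw, hvw', Matrix.add_vecMul]⟩, ?_⟩
    rw [hx, hy, concat_add_s13, show (u+v) + (u'+v') = (u+u') + (v+v') from by funext i; simp only [Pi.add_apply]; ring]

lemma bw_ones : ∀ t : ℕ, (fun _ => (1:ℝ) : Fin (2^t) → ℝ) ∈ BW t := by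
  intro t
  induction t with
  | zero => intro i; exact ⟨1, by simp⟩
  | succ s ih =>
    refine (mem_bw_succ _).mpr ⟨fun _ => 1, 0, ih, ⟨0, bw_zero s, by rw [Matrix.zero_vecMul]⟩, ?_⟩
    funext i
    obtain ⟨iv, hi⟩ := i
    by_cases h : iv < 2^s
    · rw [concat_apply_lt _ _ _ _ h]
    · rw [concat_apply_ge _ _ _ _ h]; simp

lemma ones_ne_zero {t : ℕ} : (fun _ => (1:ℝ) : Fin (2^t) → ℝ) ≠ 0 := by
  intro h
  have := congrFun h ⟨0, by positivity⟩
  simpa using this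

/-- BW 1 is exactly the integer vectors. -/
lemma bw_one_iff (x : Fin (2^1) → ℝ) : x ∈ BW 1 ↔ ∀ i, ∃ z : ℤ, x i = (z : ℝ) := by
  have rmat1 : ∀ w : Fin (2^0) → ℝ, Matrix.vecMul w (Rmat (2^0)) = w := by
    intro w
    funext i
    have hi : i = ⟨0, by norm_num⟩ := by omega
    subst hi
    rw [Matrix.vecMul, dotProduct]
    rw [show (Finset.univ : Finset (Fin (2^0))) = {⟨0, by norm_num⟩} from rfl,
      Finset.sum_singleton]
    have : Rmat (2^0) ⟨0, by norm_num⟩ ⟨0, by norm_num⟩ = 1 := by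
      rw [Rmat_apply]; norm_num
    rw [this, mul_one]
  constructor
  · intro hx i
    obtain ⟨u, v, hu, ⟨w, hw, hvw⟩, hxc⟩ := (mem_bw_succ x).mp hx
    rw [rmat1 w] at hvw
    subst hvw
    obtain ⟨iv, hi⟩ := i
    subst hxc
    by_cases h : iv < 2^0
    · rw [concat_apply_lt _ _ _ _ h]
      exact hu _
    · rw [concat_apply_ge _ _ _ _ h]
      simp only [Pi.add_apply]
      obtain ⟨z1, hz1⟩ := hu ⟨iv - 2^0, by omega⟩
      obtain ⟨z2, hz2⟩ := hw ⟨iv - 2^0, by omega⟩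
      refine ⟨z1 + z2, ?_⟩
      push_cast
      rw [show (⟨iv - 2^0, by omega⟩ : Fin (2^0)) = ⟨iv - 2^0, by omega⟩ from rfl] at hz1 hz2
      convert congrArg₂ (· + ·) hz1 hz2 using 2 <;> congr 1 <;> omega
  · intro hx
    refine (mem_bw_succ _).mpr ⟨fun _ => x ⟨0, by norm_num⟩,
      fun _ => x ⟨1, by norm_num⟩ - x ⟨0, by norm_num⟩, ?_, ?_, ?_⟩
    · intro i
      exact hx ⟨0, by norm_num⟩
    · refine ⟨fun _ => x ⟨1, by norm_num⟩ - x ⟨0, by norm_num⟩, ?_, (rmat1 _).symm⟩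
      intro i
      obtain ⟨z1, hz1⟩ := hx ⟨1, by norm_num⟩
      obtain ⟨z0, hz0⟩ := hx ⟨0, by norm_num⟩
      refine ⟨z1 - z0, ?_⟩
      push_cast
      rw [← hz1, ← hz0]
      norm_num
    · funext i
      obtain ⟨iv, hi⟩ := i
      by_cases h : iv < 2^0
      · rw [concat_apply_lt _ _ _ _ h]
        congr 1
        exact Fin.ext (by simp only [Fin.val_mk]; omega)
      · rw [concat_apply_ge _ _ _ _ h]
        simp only [Pi.add_apply]
        have : iv = 1 := by norm_num at h hi; omega
        subst this
        try ring_nf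
        try congr 1
  
lemma rbw_subset_bw : ∀ t : ℕ, RBW t ⊆ BW t := by
  intro t
  induction t with
  | zero =>
    rintro x ⟨w, hw, rfl⟩
    have rmat1 : Matrix.vecMul w (Rmat (2^0)) = w := by
      funext i
      have hi : i = ⟨0, by norm_num⟩ := by omega
      subst hi
      rw [Matrix.vecMul, dotProduct]
      rw [show (Finset.univ : Finset (Fin (2^0))) = {⟨0, by norm_num⟩} from rfl,
        Finset.sum_singleton]
      have : Rmat (2^0) ⟨0, by norm_num⟩ ⟨0, by norm_num⟩ = 1 := by
        rw [Rmat_apply]; norm_num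
      rw [this, mul_one]
    show Matrix.vecMul w (Rmat (2^0)) ∈ BW 0
    rw [rmat1]
    exact hw
  | succ s ih =>
    match s, ih with
    | 0, _ =>
      rintro x ⟨w, hw, rfl⟩
      rw [bw_one_iff]
      rw [bw_one_iff] at hw
      intro j
      obtain ⟨jv, hj⟩ := j
      show ∃ z : ℤ, Matrix.vecMul w (Rmat (2^(0+1))) ⟨jv, hj⟩ = (z : ℝ)
      have h2 : (2:ℕ)^(0+1) = 1*2 := by norm_num
      obtain ⟨z0, hz0⟩ := hw ⟨0, by norm_num⟩
      obtain ⟨z1, hz1⟩ := hw ⟨1, by norm_num⟩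
      rcases Nat.mod_two_eq_zero_or_one jv with h | h
      · rw [vecMul_Rmat_even h2 w jv hj h]
        have hjv : jv = 0 := by omega
        subst hjv
        refine ⟨z0 + z1, ?_⟩
        rw [show (⟨0, hj⟩ : Fin (2^(0+1))) = ⟨0, by norm_num⟩ from rfl] at *
        rw [hz0, show (⟨0+1, by omega⟩ : Fin (2^(0+1))) = ⟨1, by norm_num⟩ from rfl, hz1]
        push_cast; ring
      · rw [vecMul_Rmat_odd h2 w jv hj h]
        have hjv : jv = 1 := by omega
        subst hjv
        refine ⟨z0 - z1, ?_⟩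
        rw [show (⟨1-1, by omega⟩ : Fin (2^(0+1))) = ⟨0, by norm_num⟩ from rfl, hz0,
          show (⟨1, hj⟩ : Fin (2^(0+1))) = ⟨1, by norm_num⟩ from rfl, hz1]
        push_cast; ring
    | r+1, ih =>
      rintro x ⟨p, hp, rfl⟩
      obtain ⟨u, v, hu, ⟨w, hw, hvw⟩, hpc⟩ := (mem_bw_succ p).mp hp
      subst hpc
      show Matrix.vecMul (concat u (u + v)) (Rmat (2^(r+1+1))) ∈ BW (r+1+1)
      rw [vecMul_Rmat_concat]
      refine (mem_bw_succ _).mpr ⟨Matrix.vecMul u (Rmat (2^(r+1))),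
        Matrix.vecMul v (Rmat (2^(r+1))), ih ⟨u, hu, rfl⟩,
        ⟨Matrix.vecMul w (Rmat (2^(r+1))), ih ⟨w, hw, rfl⟩, by rw [hvw]⟩, ?_⟩
      rw [Matrix.add_vecMul]

/-! ### minDist lemmas -/

lemma minDist_bddBelow {m : ℕ} (Λ : Set (Fin m → ℝ)) :
    BddBelow (sqnorm '' {x ∈ Λ | x ≠ 0}) :=
  ⟨0, by rintro y ⟨z, _, rfl⟩; exact sqnorm_nonneg z⟩

lemma minDist_le {m : ℕ} {Λ : Set (Fin m → ℝ)} {x : Fin m → ℝ} (hx : x ∈ Λ) (hx0 : x ≠ 0) :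
    minDist Λ ≤ sqnorm x :=
  csInf_le (minDist_bddBelow Λ) ⟨x, ⟨hx, hx0⟩, rfl⟩

lemma bw_nonempty (t : ℕ) : (sqnorm '' {x ∈ BW t | x ≠ 0}).Nonempty :=
  ⟨sqnorm (fun _ => (1:ℝ)), ⟨fun _ => 1, ⟨bw_ones t, ones_ne_zero⟩, rfl⟩⟩

lemma vecMul_Rmat_ne_zero {r : ℕ} {x : Fin (2^(r+1)) → ℝ} (hx : x ≠ 0) :
    Matrix.vecMul x (Rmat (2^(r+1))) ≠ 0 := by
  intro h
  apply hx
  rw [← sqnorm_eq_zero_iff] at h ⊢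
  rw [sqnorm_vecMul_Rmat (pow_succ 2 r) x] at h
  linarith
  
lemma rbw_nonempty (r : ℕ) : (sqnorm '' {x ∈ RBW (r+1) | x ≠ 0}).Nonempty :=
  ⟨sqnorm (Matrix.vecMul (fun _ => (1:ℝ)) (Rmat (2^(r+1)))),
    ⟨_, ⟨⟨fun _ => 1, bw_ones (r+1), rfl⟩, vecMul_Rmat_ne_zero ones_ne_zero⟩, rfl⟩⟩

lemma minDist_RBW (r : ℕ) : minDist (RBW (r+1)) = 2 * minDist (BW (r+1)) := by
  have hpow : (2:ℕ)^(r+1) = 2^r * 2 := pow_succ 2 r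
  apply le_antisymm
  · have hlb : (1/2) * minDist (RBW (r+1)) ≤ minDist (BW (r+1)) := by
      apply le_csInf (bw_nonempty (r+1))
      rintro y ⟨x, ⟨hx, hx0⟩, rfl⟩
      have h1 : minDist (RBW (r+1)) ≤ sqnorm (Matrix.vecMul x (Rmat (2^(r+1)))) :=
        minDist_le ⟨x, hx, rfl⟩ (vecMul_Rmat_ne_zero hx0)
      rw [sqnorm_vecMul_Rmat hpow] at h1
      linarith
    linarith
  · apply le_csInf (rbw_nonempty r)
    rintro y ⟨x, ⟨⟨w, hw, rfl⟩, hx0⟩, rfl⟩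
    have hw0 : w ≠ 0 := by
      intro h; apply hx0; rw [h]; exact Matrix.zero_vecMul _
    have := minDist_le hw hw0
    rw [sqnorm_vecMul_Rmat hpow]
    linarith

lemma minDist_BW_succ (r : ℕ) : minDist (BW (r+1+1)) = 2 * minDist (BW (r+1)) := by
  have hpow : (2:ℕ)^(r+1) = 2^r * 2 := pow_succ 2 r
  apply le_antisymm
  · have hlb : (1/2) * minDist (BW (r+1+1)) ≤ minDist (BW (r+1)) := by
      apply le_csInf (bw_nonempty (r+1))
      rintro y ⟨x, ⟨hx, hx0⟩, rfl⟩
      have hmem : concat x (x + 0) ∈ BW (r+1+1) :=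
        (mem_bw_succ _).mpr ⟨x, 0, hx, ⟨0, bw_zero (r+1), by rw [Matrix.zero_vecMul]⟩, rfl⟩
      have hne : concat x (x + 0) ≠ 0 := fun h => hx0 (concat_fst_eq_zero h)
      have h1 := minDist_le hmem hne
      rw [sqnorm_concat, add_zero] at h1
      linarith
    linarith
  · apply le_csInf (bw_nonempty (r+1+1))
    rintro y ⟨x, ⟨hx, hx0⟩, rfl⟩
    obtain ⟨u, v, hu, ⟨w, hw, hvw⟩, rfl⟩ := (mem_bw_succ x).mp hx
    rw [sqnorm_concat]
    by_cases hv : v = 0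
    · have hu0 : u ≠ 0 := by
        intro h; apply hx0; exact concat_eq_zero _ _ h (by rw [h, hv, add_zero])
      have := minDist_le hu hu0
      rw [hv, add_zero]
      linarith
    · have hw0 : w ≠ 0 := by
        intro h; apply hv; rw [hvw, h, Matrix.zero_vecMul]
      have hvRBW : v ∈ RBW (r+1) := ⟨w, hw, hvw.symm⟩
      have hvmin : 2 * minDist (BW (r+1)) ≤ sqnorm v := by
        have := minDist_le hvRBW hv
        rw [minDist_RBW] at this
        linarith
      by_cases h2uv : (fun i => 2 * u i + v i) = 0
      · have huv : u + v = -u := by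
          funext i
          have := congrFun h2uv i
          simp only [Pi.zero_apply] at this
          simp only [Pi.add_apply, Pi.neg_apply]
          linarith
        have hu0 : u ≠ 0 := by
          intro h
          apply hv
          funext i
          have := congrFun h2uv i
          have h2 := congrFun h i
          simp only [Pi.zero_apply] at *
          linarith [this, h2]
        have hsq : sqnorm (u + v) = sqnorm u := by
          rw [huv, sqnorm, sqnorm]
          exact Finset.sum_congr rfl fun i _ => by simp [neg_sq]
        have := minDist_le hu hu0
        rw [hsq]
        linarith
      · have h2uvRBW : (fun i => 2 * u i + v i) ∈ RBW (r+1) := by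
          refine ⟨Matrix.vecMul u (Rmat (2^(r+1))) + w,
            bw_add _ _ _ (rbw_subset_bw (r+1) ⟨u, hu, rfl⟩) hw, ?_⟩
          show Matrix.vecMul (Matrix.vecMul u (Rmat (2^(r+1))) + w) (Rmat (2^(r+1))) = fun i => 2 * u i + v i
          rw [Matrix.add_vecMul, vecMul_vecMul_Rmat hpow, ← hvw]
          funext i
          simp
        have h2uvmin : 2 * minDist (BW (r+1)) ≤ sqnorm (fun i => 2 * u i + v i) := by
          have := minDist_le h2uvRBW h2uv
          rw [minDist_RBW] at this
          linarith
        have hpar := parallelogram u v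
        linarith

/-- For `x = (u, u+v) ∈ BW_{2n}` with `u ∈ BW_n`, `v ∈ RBW_n`, the
relative squared distances satisfy
`‖y − x‖²/d(BW_{2n}) = (1/2)·‖y₁ − u‖²/d(BW_n) + ‖(y₂ − u) − v‖²/d(RBW_n)`. -/
theorem bw_relative_distance_split :
    ∀ t : ℕ, 1 ≤ t → ∀ y₁ y₂ u v : Fin (2 ^ t) → ℝ,
      u ∈ BW t → v ∈ RBW t →
      sqnorm (concat y₁ y₂ - concat u (u + v)) / minDist (BW (t + 1)) =
        (1 / 2) * (sqnorm (y₁ - u) / minDist (BW t)) +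
          sqnorm (y₂ - u - v) / minDist (RBW t) := by
  intro t ht y₁ y₂ u v hu hv
  obtain ⟨r, rfl⟩ : ∃ r, t = r + 1 := ⟨t - 1, by omega⟩
  rw [concat_sub, sqnorm_concat, minDist_BW_succ, minDist_RBW]
  rw [show y₂ - (u + v) = y₂ - u - v from by abel]
  set d := minDist (BW (r+1)) with hd
  rcases eq_or_ne d 0 with h | h
  · simp [h]
  · field_simp
    try ring
end
end
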